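/- Let E, F be Hilbert C*-modules and T : E → F a linear bijection preserving the triple product {x,y,z} = x⟨y,z⟩ (i.e., T(x⟨y,z⟩) = Tx⟨Ty,Tz⟩ for all x,y,z ∈ E). Then T is an isometry: ‖Tx‖ = ‖x‖ for all x ∈ E. -/

import Mathlib

open scoped RightActions ComplexOrder

/-- The Hilbert C⋆-module class as it stood in Mathlib of December 2024 (right action of `Aᵐᵒᵖ`,
`⟪x, y <• a⟫ = ⟪x, y⟫ * a`); Mathlib's `CStarModule` is now a left-action class. -/
class CStarModuleRight (A E : Type*) [NonUnitalSemiring A] [StarRing A]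
    [Module ℂ A] [AddCommGroup E] [Module ℂ E] [PartialOrder A] [SMul Aᵐᵒᵖ E] [Norm A] [Norm E]
    extends Inner A E where
  inner_add_right {x} {y} {z} : inner x (y + z) = inner x y + inner x z
  inner_self_nonneg {x} : 0 ≤ inner x x
  inner_self {x} : inner x x = 0 ↔ x = 0
  inner_op_smul_right {a : A} {x y : E} : inner x (y <• a) = inner x y * a
  inner_smul_right_complex {z : ℂ} {x} {y} : inner x (z • y) = z • inner x y
  star_inner x y : star (inner x y) = inner y x
  norm_eq_sqrt_norm_inner_self x : ‖x‖ = √‖inner x x‖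

/- If `‖x‖ < ‖T x‖`, then `μ := ‖⟨Tx, Tx⟩‖` lies outside the quasispectrum of `⟨x, x⟩`, which
produces `q` with `⟨x, x⟩ q - ⟨x, x⟩ = μ q`. Transporting `x q` through `T` gives `e` with
`(⟨Tx, Tx⟩ - μ) e = ⟨Tx, Tx⟩²`, and since `μ` is in the quasispectrum of `⟨Tx, Tx⟩` this forces
`μ² = 0`: multiplying by `f(⟨Tx, Tx⟩)` for a bump `f` at `μ` makes the left side arbitrarily small
while the right side keeps norm at least `|μ|²`. Applied to `T` and `T⁻¹` this gives equality. -/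

open Filter Topology

section Bump

variable {B : Type*} [NonUnitalCStarAlgebra B]

theorem exists_bump_mul_sub_norm_le (μ : ℂ) {δ : ℝ} (hδ : 0 < δ) (hδμ : δ ≤ ‖μ‖) :
    ∃ f : ℂ → ℂ, Continuous f ∧ f 0 = 0 ∧ f μ = 1 ∧ ∀ z, ‖f z * (z - μ)‖ ≤ δ := by
  refine ⟨fun z => ((max 0 (1 - ‖z - μ‖ / δ) : ℝ) : ℂ), by fun_prop, ?_, by simp, fun z => ?_⟩
  · simp only [zero_sub, norm_neg, Complex.ofReal_eq_zero]
    exact max_eq_left (by rw [sub_nonpos, le_div_iff₀ hδ, one_mul]; exact hδμ)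
  · rw [norm_mul, Complex.norm_real, Real.norm_of_nonneg (le_max_left _ _)]
    rcases le_total ‖z - μ‖ δ with h | h
    · calc max 0 (1 - ‖z - μ‖ / δ) * ‖z - μ‖ ≤ 1 * δ := by
            gcongr
            exact max_le zero_le_one (by have := div_nonneg (norm_nonneg (z - μ)) hδ.le; linarith)
        _ = δ := one_mul δ
    · rw [max_eq_left (by rw [sub_nonpos, le_div_iff₀ hδ, one_mul]; exact h), zero_mul]
      exact hδ.le

theorem cfcₙ_mul_mul_sub_smul (b e : B) (μ : ℂ) {f : ℂ → ℂ} (hf : Continuous f) (hf0 : f 0 = 0)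
    (hb : IsStarNormal b) :
    cfcₙ f b * (b * e - μ • e) = cfcₙ (fun z => f z * (z - μ)) b * e := by
  have hsplit : cfcₙ (fun z => f z * (z - μ)) b = cfcₙ f b * b - μ • cfcₙ f b := by
    have hfun : (fun z => f z * (z - μ)) = fun z => f z * z - μ • f z := by
      ext z; rw [smul_eq_mul]; ring
    rw [hfun, cfcₙ_sub _ _ b, cfcₙ_smul μ f b, cfcₙ_mul f (fun z => z) b, cfcₙ_id' ℂ b]
  rw [hsplit, mul_sub, sub_mul, mul_assoc, mul_smul_comm, smul_mul_assoc]

theorem apply_eq_zero_of_mul_sub_smul_eq_cfcₙ {b e : B} {μ : ℂ} (hμ : μ ∈ quasispectrum ℂ b)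
    {h : ℂ → ℂ} (hh : ContinuousOn h (quasispectrum ℂ b)) (h0 : h 0 = 0) (hb : IsStarNormal b)
    (he : b * e - μ • e = cfcₙ h b) : h μ = 0 := by
  rcases eq_or_ne μ 0 with rfl | hμ0
  · exact h0
  have hsmall : ∀ δ, 0 < δ → δ ≤ ‖μ‖ → ‖h μ‖ ≤ δ * ‖e‖ := by
    intro δ hδ hδμ
    obtain ⟨f, hf, hf0, hfμ, hfδ⟩ := exists_bump_mul_sub_norm_le μ hδ hδμ
    calc ‖h μ‖ = ‖f μ * h μ‖ := by rw [hfμ, one_mul]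
      _ ≤ ‖cfcₙ (fun z => f z * h z) b‖ := norm_apply_le_norm_cfcₙ _ b hμ (hf.continuousOn.mul hh)
      _ = ‖cfcₙ (fun z => f z * (z - μ)) b * e‖ := by
          rw [cfcₙ_mul f h b, ← he, cfcₙ_mul_mul_sub_smul b e μ hf hf0 hb]
      _ ≤ ‖cfcₙ (fun z => f z * (z - μ)) b‖ * ‖e‖ := norm_mul_le _ _
      _ ≤ δ * ‖e‖ := by gcongr; exact norm_cfcₙ_le fun z _ => hfδ z
  have hlim : Tendsto (fun δ : ℝ => δ * ‖e‖) (𝓝[>] 0) (𝓝 0) :=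
    ((continuous_id.mul continuous_const).tendsto' 0 0 (zero_mul _)).mono_left
      nhdsWithin_le_nhds
  have hev : ∀ᶠ δ in 𝓝[>] (0 : ℝ), ‖h μ‖ ≤ δ * ‖e‖ := by
    filter_upwards [Ioc_mem_nhdsGT (norm_pos_iff.mpr hμ0)] with δ hδ using hsmall δ hδ.1 hδ.2
  exact norm_le_zero_iff.mp (ge_of_tendsto hlim hev)

end Bump

theorem exists_mul_sub_eq_smul_of_notMem_quasispectrum {R A : Type*} [CommRing R]
    [NonUnitalRing A] [Module R A] [IsScalarTower R A A]
    {a : A} {μ : R} (hμ : μ ∉ quasispectrum R a) : ∃ q : A, a * q - a = μ • q := by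
  simp only [quasispectrum, Set.mem_ofPred_eq, not_forall, not_not] at hμ
  obtain ⟨hu, hq⟩ := hμ
  obtain ⟨y, hy, -⟩ := isQuasiregular_iff.mp hq
  refine ⟨-y, ?_⟩
  have h := congrArg (hu.unit • ·) hy
  simp only [smul_add, smul_neg, smul_zero, neg_mul, smul_inv_smul, smul_mul_assoc] at h
  simp only [Units.smul_def, IsUnit.unit_spec] at h
  have hμy : μ • y = a + a * y := by rw [← sub_eq_zero, ← h]; abel
  rw [mul_neg, smul_neg, hμy]
  abel

namespace CStarModuleRight

variable {A E : Type*} [NonUnitalRing A] [StarRing A] [Module ℂ A] [PartialOrder A] [Norm A]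
  [AddCommGroup E] [Module ℂ E] [SMul Aᵐᵒᵖ E] [Norm E] [CStarModuleRight A E]

theorem inner_sub_right (x y z : E) : inner A x (y - z) = inner A x y - inner A x z := by
  rw [eq_sub_iff_add_eq, ← CStarModuleRight.inner_add_right, sub_add_cancel]

theorem ext_inner_left {u v : E} (h : ∀ z, inner A z u = inner A z v) : u = v := by
  rw [← sub_eq_zero, ← CStarModuleRight.inner_self (A := A), inner_sub_right, h, sub_self]

theorem op_smul_sub (x : E) (c d : A) : x <• (c - d) = x <• c - x <• d :=
  ext_inner_left (A := A) fun z => by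
    rw [inner_sub_right, inner_op_smul_right, inner_op_smul_right, inner_op_smul_right, mul_sub]

theorem op_smul_complex_smul [SMulCommClass ℂ A A] (x : E) (w : ℂ) (c : A) :
    x <• (w • c) = w • (x <• c) :=
  ext_inner_left (A := A) fun z => by
    rw [inner_smul_right_complex, inner_op_smul_right, inner_op_smul_right, mul_smul_comm]

theorem isSelfAdjoint_inner_self (x : E) : IsSelfAdjoint (inner A x x) :=
  star_inner x x

end CStarModuleRight

open CStarModuleRight

def IsTripleHom (A B : Type*) {E F : Type*} [NonUnitalSemiring A] [StarRing A] [Module ℂ A]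
    [PartialOrder A] [Norm A] [AddCommGroup E] [Module ℂ E] [SMul Aᵐᵒᵖ E] [Norm E]
    [CStarModuleRight A E] [NonUnitalSemiring B] [StarRing B] [Module ℂ B]
    [PartialOrder B] [Norm B] [AddCommGroup F] [Module ℂ F] [SMul Bᵐᵒᵖ F] [Norm F]
    [CStarModuleRight B F] (T : E →ₗ[ℂ] F) : Prop :=
  ∀ x y z : E, T (x <• inner A y z) = T x <• inner B (T y) (T z)

namespace IsTripleHom

section Algebraic

variable {A B E F : Type*} [NonUnitalRing A] [StarRing A] [Module ℂ A]
  [PartialOrder A] [Norm A] [AddCommGroup E] [Module ℂ E] [SMul Aᵐᵒᵖ E] [Norm E]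
  [CStarModuleRight A E] [NonUnitalRing B] [StarRing B] [Module ℂ B]
  [PartialOrder B] [Norm B] [AddCommGroup F] [Module ℂ F] [SMul Bᵐᵒᵖ F] [Norm F]
  [CStarModuleRight B F] {T : E →ₗ[ℂ] F}

theorem mul_sub_smul_eq [SMulCommClass ℂ A A] (hT : IsTripleHom A B T) (x : E) {q : A} {μ : ℂ}
    (hq : inner A x x * q - inner A x x = μ • q) :
    inner B (T x) (T x) * inner B (T x) (T (x <• q)) - μ • inner B (T x) (T (x <• q)) =
      inner B (T x) (T x) * inner B (T x) (T x) := by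
  have hTv : μ • T (x <• q) = T x <• inner B (T x) (T (x <• q)) - T x <• inner B (T x) (T x) := by
    rw [← hT x x (x <• q), ← hT x x x, ← map_sub, ← map_smul, inner_op_smul_right, ← op_smul_sub,
      hq, op_smul_complex_smul]
  have he := congrArg (inner B (T x)) hTv
  rw [inner_smul_right_complex, CStarModuleRight.inner_sub_right, inner_op_smul_right,
    inner_op_smul_right] at he
  rw [he]
  abel

theorem symm {T : E ≃ₗ[ℂ] F} (hT : IsTripleHom A B T.toLinearMap) :
    IsTripleHom B A T.symm.toLinearMap := fun x y z =>
  T.injective <| by simpa using (hT (T.symm x) (T.symm y) (T.symm z)).symm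

end Algebraic

variable {A B E F : Type*} [NonUnitalCStarAlgebra A] [PartialOrder A]
  [NonUnitalCStarAlgebra B] [PartialOrder B]
  [AddCommGroup E] [Module ℂ E] [SMul Aᵐᵒᵖ E] [Norm E] [CStarModuleRight A E]
  [AddCommGroup F] [Module ℂ F] [SMul Bᵐᵒᵖ F] [Norm F] [CStarModuleRight B F] {T : E →ₗ[ℂ] F}

theorem quasispectrum_inner_self_map_subset (hT : IsTripleHom A B T) (x : E) :
    quasispectrum ℂ (inner B (T x) (T x)) ⊆ quasispectrum ℂ (inner A x x) := by
  have hb := (isSelfAdjoint_inner_self (A := B) (T x)).isStarNormal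
  intro μ hμ
  by_contra hμx
  obtain ⟨q, hq⟩ := exists_mul_sub_eq_smul_of_notMem_quasispectrum hμx
  have hμ0 : μ ≠ 0 := fun h => hμx (h ▸ quasispectrum.zero_mem ℂ _)
  have hsq : cfcₙ (fun z : ℂ => z * z) (inner B (T x) (T x)) =
      inner B (T x) (T x) * inner B (T x) (T x) := by
    rw [cfcₙ_mul (fun z => z) (fun z => z) (inner B (T x) (T x)), cfcₙ_id' ℂ (inner B (T x) (T x))]
  refine hμ0 (mul_self_eq_zero.mp (apply_eq_zero_of_mul_sub_smul_eq_cfcₙ (h := fun z => z * z) hμ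
    (by fun_prop) (mul_zero 0) hb ((hT.mul_sub_smul_eq x hq).trans hsq.symm)))

theorem norm_map_le (hT : IsTripleHom A B T) (x : E) : ‖T x‖ ≤ ‖x‖ := by
  have hb := (isSelfAdjoint_inner_self (A := B) (T x)).isStarNormal
  obtain ⟨μ, hμ, hμb⟩ :=
    (NonUnitalIsometricContinuousFunctionalCalculus.isGreatest_norm_quasispectrum (𝕜 := ℂ)
      (inner B (T x) (T x))).1
  have hle : ‖inner B (T x) (T x)‖ ≤ ‖inner A x x‖ :=
    hμb ▸ NonUnitalIsometricContinuousFunctionalCalculus.norm_quasispectrum_le _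
      (hT.quasispectrum_inner_self_map_subset x hμ) (isSelfAdjoint_inner_self x).isStarNormal
  rw [norm_eq_sqrt_norm_inner_self (A := B) (T x), norm_eq_sqrt_norm_inner_self (A := A) x]
  exact Real.sqrt_le_sqrt hle

end IsTripleHom

theorem triple_hom_isometry_general
    {A B E F : Type*}
    [NonUnitalCStarAlgebra A] [PartialOrder A]
    [NonUnitalCStarAlgebra B] [PartialOrder B]
    [AddCommGroup E] [Module ℂ E] [SMul Aᵐᵒᵖ E] [Norm E] [CStarModuleRight A E]
    [AddCommGroup F] [Module ℂ F] [SMul Bᵐᵒᵖ F] [Norm F] [CStarModuleRight B F]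
    (T : E →ₗ[ℂ] F) (hbij : Function.Bijective T)
    (htriple : ∀ x y z : E, T (x <• (inner A y z : A)) = T x <• (inner B (T y) (T z) : B)) :
    ∀ x : E, ‖T x‖ = ‖x‖ := by
  intro x
  let S := LinearEquiv.ofBijective T hbij
  have hS : IsTripleHom A B S.toLinearMap := htriple
  refine le_antisymm (IsTripleHom.norm_map_le htriple x) ?_
  simpa [S] using hS.symm.norm_map_le (T x)

/-- A linear bijection between Hilbert C*-modules preserving the triple product
`{x,y,z} = x⟨y,z⟩` is an isometry. -/
theorem triple_hom_isometry
    {A B E F : Type*}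
    [NonUnitalCStarAlgebra A] [PartialOrder A] [StarOrderedRing A]
    [NonUnitalCStarAlgebra B] [PartialOrder B] [StarOrderedRing B]
    [AddCommGroup E] [Module ℂ E] [SMul Aᵐᵒᵖ E] [Norm E] [CStarModuleRight A E]
    [AddCommGroup F] [Module ℂ F] [SMul Bᵐᵒᵖ F] [Norm F] [CStarModuleRight B F]
    (T : E →ₗ[ℂ] F) (hbij : Function.Bijective T)
    (htriple : ∀ x y z : E, T (x <• (inner A y z : A)) = T x <• (inner B (T y) (T z) : B)) :
    ∀ x : E, ‖T x‖ = ‖x‖ :=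
  triple_hom_isometry_general T hbij htriple
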